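/- If F ∈ ℂ^{A_•} factors as F = G ∘ Φ_B for a monomial map Φ_B with |det B| = m, then the number of solutions of F = 0 in (ℂ*)^n equals m times the number of solutions of G = 0 in (ℂ*)^n, provided all solutions are counted without multiplicity and G has finitely many solutions in the torus. -/

import Mathlib

/-- The monomial map on the torus `(ℂ*)^n` associated to an integer matrix `B`. -/
def monomialMap {n : ℕ} (B : Matrix (Fin n) (Fin n) ℤ) (x : Fin n → ℂˣ) : Fin n → ℂˣ :=
  fun i => ∏ j, (x j) ^ (B i j)

/-!
By the Smith normal form, `B = P * diagonal a * Q` with `P`, `Q` invertible over `ℤ`, so the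
monomial map of `B` is the coordinatewise map `x ↦ (x i ^ a i)` up to automorphisms of the torus.
Its kernel therefore has `∏ |a i| = |det B|` points. It is surjective, since composed with the
monomial map of `adjugate B` it becomes `x ↦ x ^ det B`. Hence every fibre of `Φ_B` has
`|det B|` points, and the zeros of `F = G ∘ Φ_B` are the fibres over the zeros of `G`.
-/

open Matrix

theorem MonoidHom.natCard_preimage_of_surjective {G H : Type*} [Group G] [Group H] (φ : G →* H)
    (hφ : Function.Surjective φ) (S : Set H) :
    Nat.card (φ ⁻¹' S) = Nat.card φ.ker * Nat.card S := by
  let e := QuotientGroup.quotientKerEquivOfSurjective φ hφ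
  have : φ ⁻¹' S = QuotientGroup.mk ⁻¹' (e ⁻¹' S) := rfl
  rw [this, QuotientGroup.card_preimage_mk,
    Nat.card_preimage_of_injective e.injective (by simp [e.surjective.range_eq])]

section MonomialHom

variable {ι M : Type*} [Fintype ι] [CommGroup M]

def monomialHom (B : Matrix ι ι ℤ) : (ι → M) →* (ι → M) where
  toFun x i := ∏ j, x j ^ B i j
  map_one' := by ext; simp
  map_mul' x y := by ext; simp [mul_zpow, Finset.prod_mul_distrib]

lemma monomialHom_apply (B : Matrix ι ι ℤ) (x : ι → M) (i : ι) :
    monomialHom B x i = ∏ j, x j ^ B i j := rfl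

lemma monomialHom_mul (A B : Matrix ι ι ℤ) :
    (monomialHom (A * B) : (ι → M) →* (ι → M)) = (monomialHom A).comp (monomialHom B) := by
  have zpow_sum (z : M) (f : ι → ℤ) : z ^ (∑ j, f j) = ∏ j, z ^ f j :=
    map_sum (zpowersHom M z).toAdditiveRight f _
  refine MonoidHom.ext fun x => funext fun i => ?_
  simp only [monomialHom_apply, MonoidHom.comp_apply, mul_apply, zpow_sum, ← Finset.prod_zpow,
    ← _root_.zpow_mul, mul_comm (A i _)]
  exact Finset.prod_comm

variable [DecidableEq ι]

@[simp]
lemma monomialHom_diagonal_apply (a : ι → ℤ) (x : ι → M) (i : ι) :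
    monomialHom (diagonal a) x i = x i ^ a i := by
  rw [monomialHom_apply, Finset.prod_eq_single i (fun j _ hj => by simp [Ne.symm hj]) (by simp)]
  simp

@[simp]
lemma monomialHom_one :
    (monomialHom (1 : Matrix ι ι ℤ) : (ι → M) →* (ι → M)) = MonoidHom.id _ := by
  refine MonoidHom.ext fun x => funext fun i => ?_
  simpa using monomialHom_diagonal_apply (fun _ => (1 : ℤ)) x i

def monomialEquiv (U : (Matrix ι ι ℤ)ˣ) : (ι → M) ≃* (ι → M) where
  toFun := monomialHom (U : Matrix ι ι ℤ)
  map_mul' := map_mul _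
  invFun := monomialHom ↑U⁻¹
  left_inv x := by
    rw [← MonoidHom.comp_apply, ← monomialHom_mul, U.inv_mul, monomialHom_one,
      MonoidHom.id_apply]
  right_inv x := by
    rw [← MonoidHom.comp_apply, ← monomialHom_mul, U.mul_inv, monomialHom_one,
      MonoidHom.id_apply]

@[simp]
lemma coe_monomialEquiv (U : (Matrix ι ι ℤ)ˣ) :
    ((monomialEquiv U : (ι → M) ≃* (ι → M)) : (ι → M) →* (ι → M)) =
      monomialHom (U : Matrix ι ι ℤ) :=
  rfl

def kerMonomialHomDiagonalEquiv (a : ι → ℤ) :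
    (monomialHom (diagonal a) : (ι → M) →* (ι → M)).ker ≃ ∀ i, {z : M // z ^ a i = 1} :=
  (Equiv.subtypeEquivRight fun x => by simp [MonoidHom.mem_ker, funext_iff]).trans
    Equiv.subtypePiEquivPi

lemma monomialHom_diagonal_surjective {a : ι → ℤ}
    (ha : ∀ i, Function.Surjective fun z : M => z ^ a i) :
    Function.Surjective (monomialHom (diagonal a) : (ι → M) →* (ι → M)) := by
  choose r hr using ha
  exact fun y => ⟨fun i => r i (y i), funext fun i => by simp [hr]⟩

end MonomialHom

theorem Matrix.exists_eq_mul_diagonal_mul {R ι : Type*} [CommRing R] [IsDomain R]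
    [IsPrincipalIdealRing R] [Fintype ι] [DecidableEq ι] (B : Matrix ι ι R) (hB : B.det ≠ 0) :
    ∃ (P Q : (Matrix ι ι R)ˣ) (a : ι → R), B = P * diagonal a * Q := by
  let std := Pi.basisFun R ι
  have hinj : Function.Injective (toLin' B) := by
    refine (injective_iff_map_eq_zero _).mpr fun v hv => ?_
    by_contra hv0
    exact hB (exists_mulVec_eq_zero_iff.mp ⟨v, hv0, hv⟩)
  let N := LinearMap.range (toLin' B)
  let e : (ι → R) ≃ₗ[R] N := LinearEquiv.ofInjective _ hinj
  obtain ⟨bM, a, bN, hsnf⟩ := N.exists_smith_normal_form_of_rank_eq std e.finrank_eq.symm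
  let _ := std.invertibleToMatrix bM
  let _ := bN.invertibleToMatrix (std.map e)
  refine ⟨unitOfInvertible (std.toMatrix bM), unitOfInvertible (bN.toMatrix (std.map e)), a, ?_⟩
  have hfactor : toLin' B = N.subtype ∘ₗ e.toLinearMap := rfl
  have hP : LinearMap.toMatrix bN std N.subtype = std.toMatrix bM * diagonal a := by
    ext i j
    simp [LinearMap.toMatrix_apply, Module.Basis.toMatrix_apply, hsnf, mul_comm]
  have hQ : LinearMap.toMatrix std bN e.toLinearMap = bN.toMatrix (std.map e) := by
    ext i j
    simp [LinearMap.toMatrix_apply, Module.Basis.toMatrix_apply, Module.Basis.map_apply]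
  calc B = LinearMap.toMatrix std std (toLin' B) := by
        rw [LinearMap.toMatrix_eq_toMatrix', LinearMap.toMatrix'_toLin']
    _ = _ := by rw [hfactor, LinearMap.toMatrix_comp _ bN, hP, hQ]; rfl

section AlgClosed

variable {K ι : Type*} [Field K] [IsAlgClosed K] [Fintype ι] [DecidableEq ι]

lemma IsAlgClosed.units_zpow_surjective {m : ℤ} (hm : m ≠ 0) :
    Function.Surjective fun z : Kˣ => z ^ m := by
  intro y
  obtain ⟨x, hx⟩ := IsAlgClosed.exists_pow_nat_eq (y : K) (Int.natAbs_pos.mpr hm)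
  have hx0 : x ≠ 0 := by rintro rfl; exact y.ne_zero (by simpa [hm] using hx.symm)
  have hxy : Units.mk0 x hx0 ^ m.natAbs = y := Units.ext (by simpa using hx)
  rcases Int.natAbs_eq m with h | h
  · exact ⟨Units.mk0 x hx0, show _ ^ m = y by rw [h, zpow_natCast, hxy]⟩
  · refine ⟨(Units.mk0 x hx0)⁻¹, show _ ^ m = y from ?_⟩
    rw [h, _root_.zpow_neg, zpow_natCast, inv_pow, inv_inv, hxy]

lemma IsAlgClosed.natCard_units_zpow_eq_one [CharZero K] {m : ℤ} (hm : m ≠ 0) :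
    Nat.card {z : Kˣ // z ^ m = 1} = m.natAbs := by
  have : NeZero m.natAbs := ⟨Int.natAbs_ne_zero.mpr hm⟩
  rw [← HasEnoughRootsOfUnity.natCard_rootsOfUnity K m.natAbs]
  exact Nat.card_congr <|
    Equiv.subtypeEquivRight fun z => by rw [mem_rootsOfUnity, pow_natAbs_eq_one]

theorem monomialHom_surjective {B : Matrix ι ι ℤ} (hB : B.det ≠ 0) :
    Function.Surjective (monomialHom B : (ι → Kˣ) →* (ι → Kˣ)) := by
  have hpow : (monomialHom B).comp (monomialHom B.adjugate) =
      (monomialHom (diagonal fun _ => B.det) : (ι → Kˣ) →* (ι → Kˣ)) := by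
    rw [← monomialHom_mul, mul_adjugate, smul_one_eq_diagonal]
  have hsurj := monomialHom_diagonal_surjective (ι := ι) fun _ =>
    IsAlgClosed.units_zpow_surjective (K := K) hB
  rw [← hpow, MonoidHom.coe_comp] at hsurj
  exact hsurj.of_comp

theorem natCard_ker_monomialHom [CharZero K] {B : Matrix ι ι ℤ} (hB : B.det ≠ 0) :
    Nat.card (monomialHom B : (ι → Kˣ) →* (ι → Kˣ)).ker = B.det.natAbs := by
  obtain ⟨P, Q, a, rfl⟩ := B.exists_eq_mul_diagonal_mul hB
  have hdet : ((P * diagonal a * Q : Matrix ι ι ℤ)).det.natAbs = ∏ i, (a i).natAbs := by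
    have hunit (U : (Matrix ι ι ℤ)ˣ) : (U : Matrix ι ι ℤ).det.natAbs = 1 :=
      Int.isUnit_iff_natAbs_eq.mp ((isUnit_iff_isUnit_det _).mp U.isUnit)
    rw [det_mul, det_mul, det_diagonal, Int.natAbs_mul, Int.natAbs_mul, hunit, hunit,
      one_mul, mul_one]
    exact map_prod Int.natAbsHom a Finset.univ
  have ha (i : ι) : a i ≠ 0 := by
    simp only [det_mul, det_diagonal, ne_eq, mul_eq_zero, not_or] at hB
    exact Finset.prod_ne_zero_iff.mp hB.1.2 i (Finset.mem_univ i)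
  have hfactor :
      (monomialHom (P * diagonal a * Q : Matrix ι ι ℤ) : (ι → Kˣ) →* (ι → Kˣ)) =
      ((monomialEquiv (M := Kˣ) P : (ι → Kˣ) →* (ι → Kˣ))).comp
        ((monomialHom (diagonal a)).comp
          (monomialEquiv (M := Kˣ) Q : (ι → Kˣ) →* (ι → Kˣ))) := by
    simp only [monomialHom_mul, coe_monomialEquiv, MonoidHom.comp_assoc]
  rw [hfactor, MonoidHom.ker_mulEquiv_comp, MonoidHom.ker_comp_mulEquiv,
    Subgroup.card_map_of_injective (MulEquiv.injective _),
    Nat.card_congr (kerMonomialHomDiagonalEquiv a), Nat.card_pi, hdet]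
  exact Finset.prod_congr rfl fun i _ => IsAlgClosed.natCard_units_zpow_eq_one (ha i)

end AlgClosed

theorem lacunary_solution_count_general {n : ℕ} (B : Matrix (Fin n) (Fin n) ℤ) (hB : B.det ≠ 0)
    (F G : (Fin n → ℂˣ) → Fin n → ℂ) (hFG : ∀ x, F x = G (monomialMap B x)) :
    Nat.card {x : Fin n → ℂˣ // F x = 0} =
      B.det.natAbs * Nat.card {y : Fin n → ℂˣ // G y = 0} := by
  have hsol : {x | F x = 0} = monomialHom B ⁻¹' {y | G y = 0} :=
    Set.ext fun x => Iff.of_eq (congrArg (· = 0) (hFG x))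
  have hcount := (monomialHom B).natCard_preimage_of_surjective (monomialHom_surjective hB)
    {y | G y = 0}
  rw [← hsol, natCard_ker_monomialHom hB] at hcount
  exact hcount

theorem lacunary_solution_count {n : ℕ} (B : Matrix (Fin n) (Fin n) ℤ) (hB : B.det ≠ 0)
    (F G : (Fin n → ℂˣ) → Fin n → ℂ) (hFG : ∀ x, F x = G (monomialMap B x))
    (hfin : {y : Fin n → ℂˣ | G y = 0}.Finite) :
    Nat.card {x : Fin n → ℂˣ // F x = 0} =
      B.det.natAbs * Nat.card {y : Fin n → ℂˣ // G y = 0} :=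
  lacunary_solution_count_general B hB F G hFG
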